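/- Let λ₁,…,λ_N ∈ ℂ satisfy λⱼ* ≠ λᵢ and λⱼ* ≠ −λᵢ for all i,j, and let φᵢ = (φᵢ⁽¹⁾, φᵢ⁽²⁾)ᵀ : ℝ² → ℂ² satisfy the involution φᵢ⁽¹⁾(−ξ,−t) = −i·φᵢ⁽²⁾(ξ,t) and φᵢ⁽²⁾(−ξ,−t) = i·φᵢ⁽¹⁾(ξ,t) for all (ξ,t). Then the matrix M satisfies M(ξ,t) = −M(−ξ,−t)† for all (ξ,t). -/

import Mathlib

open Matrix Complex

/-- Partial derivative in the first (space) variable. -/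
noncomputable def dx (f : ℝ × ℝ → ℂ) (p : ℝ × ℝ) : ℂ :=
  deriv (fun x => f (x, p.2)) p.1

/-- Partial derivative in the second (time) variable. -/
noncomputable def dt (f : ℝ × ℝ → ℂ) (p : ℝ × ℝ) : ℂ :=
  deriv (fun t => f (p.1, t)) p.2

/-- The derivative nonlinear Schrödinger equation `i uₜ + uₓₓ + 2 i (|u|² u)ₓ = 0`. -/
def IsDNLSSolution (u : ℝ × ℝ → ℂ) : Prop :=
  ∀ p : ℝ × ℝ,
    Complex.I * dt u p + dx (fun q => dx u q) p +
      2 * Complex.I * dx (fun q => (Complex.normSq (u q) : ℂ) * u q) p = 0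

/-- The Pauli matrix `σ₃ = diag(1, -1)`. -/
noncomputable def sigma3 : Matrix (Fin 2) (Fin 2) ℂ := !![1, 0; 0, -1]

/-- The potential matrix `Q = [[0, i u], [i u*, 0]]`. -/
noncomputable def Qmat (u : ℝ × ℝ → ℂ) (p : ℝ × ℝ) : Matrix (Fin 2) (Fin 2) ℂ :=
  !![0, Complex.I * u p; Complex.I * (starRingEnd ℂ) (u p), 0]

/-- The Lax-pair matrix `U(Q;λ) = -2 i λ² σ₃ + 2 λ Q`. -/
noncomputable def Umat (u : ℝ × ℝ → ℂ) (l : ℂ) (p : ℝ × ℝ) : Matrix (Fin 2) (Fin 2) ℂ :=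
  (-2 * Complex.I * l ^ 2) • sigma3 + (2 * l) • Qmat u p

/-- The Lax-pair matrix `V(Q;λ) = (4 λ² + 2 Q²) U(Q;λ) + 2 i λ σ₃ Qₓ`. -/
noncomputable def Vmat (u : ℝ × ℝ → ℂ) (l : ℂ) (p : ℝ × ℝ) : Matrix (Fin 2) (Fin 2) ℂ :=
  ((4 * l ^ 2) • (1 : Matrix (Fin 2) (Fin 2) ℂ) + (2 : ℂ) • (Qmat u p * Qmat u p)) * Umat u l p
    + (2 * Complex.I * l) • (sigma3 * Matrix.of fun i j => dx (fun q => Qmat u q i j) p)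

/-- Componentwise spatial derivative of a vector-valued function. -/
noncomputable def dxv {n : ℕ} (f : ℝ × ℝ → Fin n → ℂ) (p : ℝ × ℝ) : Fin n → ℂ :=
  fun i => dx (fun q => f q i) p

/-- Componentwise temporal derivative of a vector-valued function. -/
noncomputable def dtv {n : ℕ} (f : ℝ × ℝ → Fin n → ℂ) (p : ℝ × ℝ) : Fin n → ℂ :=
  fun i => dt (fun q => f q i) p

/-- `φ` solves the Lax pair `φₓ = U(Q;λ)φ`, `φₜ = V(Q;λ)φ` at spectral parameter `λ`. -/
def IsLaxSolution (u : ℝ × ℝ → ℂ) (l : ℂ) (φ : ℝ × ℝ → Fin 2 → ℂ) : Prop :=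
  ∀ p : ℝ × ℝ, dxv φ p = Umat u l p *ᵥ φ p ∧ dtv φ p = Vmat u l p *ᵥ φ p

/-- The matrix `M` with entries
`M_{ij} = (φⱼ†φᵢ/(λⱼ* − λᵢ) − φⱼ†σ₃φᵢ/(λⱼ* + λᵢ)) λᵢ λⱼ*`. -/
noncomputable def Mmat {N : ℕ} (l : Fin N → ℂ) (φ : Fin N → ℝ × ℝ → Fin 2 → ℂ)
    (p : ℝ × ℝ) : Matrix (Fin N) (Fin N) ℂ :=
  Matrix.of fun i j =>
    ((star (φ j p) ⬝ᵥ φ i p) / (starRingEnd ℂ (l j) - l i)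
      - (star (φ j p) ⬝ᵥ (sigma3 *ᵥ φ i p)) / (starRingEnd ℂ (l j) + l i))
      * (l i * starRingEnd ℂ (l j))

/-- The vector `φ⁽ᵏ⁾ = (φ₁⁽ᵏ⁾, …, φ_N⁽ᵏ⁾)ᵀ` (with `k = 0` the first components,
`k = 1` the second components). -/
noncomputable def phiVec {N : ℕ} (φ : Fin N → ℝ × ℝ → Fin 2 → ℂ) (k : Fin 2)
    (p : ℝ × ℝ) : Fin N → ℂ :=
  fun i => φ i p k

/-!
Write the involution as `φᵢ(−ξ,−t) = σ₂ φᵢ(ξ,t)`. Since `σ₂` is unitary and anticommutes with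
`σ₃`, the form `φⱼ†φᵢ` is unchanged and `φⱼ†σ₃φᵢ` changes sign. Conjugate transposition swaps `i`
and `j` and conjugates the spectral parameters, which turns `λⱼ* − λᵢ` into `−(λⱼ* − λᵢ)` while
fixing `λⱼ* + λᵢ`; the two sign changes combine into `M(ξ,t) = −M(−ξ,−t)†`.
-/

section Sesquilinear

variable {n R : Type*} [Fintype n] [CommRing R] [StarRing R]

theorem Matrix.star_mulVec_dotProduct_mulVec_mulVec (A B : Matrix n n R) (v w : n → R) :
    star (A *ᵥ v) ⬝ᵥ (B *ᵥ (A *ᵥ w)) = star v ⬝ᵥ ((Aᴴ * B * A) *ᵥ w) := by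
  rw [star_mulVec, ← dotProduct_mulVec, mulVec_mulVec, mulVec_mulVec, Matrix.mul_assoc]

theorem Matrix.IsHermitian.star_star_dotProduct_mulVec {B : Matrix n n R} (hB : B.IsHermitian)
    (v w : n → R) : star (star v ⬝ᵥ (B *ᵥ w)) = star w ⬝ᵥ (B *ᵥ v) := by
  rw [star_dotProduct (v := w), star_mulVec, hB.eq, dotProduct_mulVec]

end Sesquilinear

noncomputable def sigma2 : Matrix (Fin 2) (Fin 2) ℂ := !![0, -Complex.I; Complex.I, 0]

theorem sigma2_mulVec (v : Fin 2 → ℂ) : sigma2 *ᵥ v = ![-Complex.I * v 1, Complex.I * v 0] := by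
  ext k; fin_cases k <;> simp [sigma2, mulVec, dotProduct, Fin.sum_univ_two]

theorem sigma3_isHermitian : sigma3.IsHermitian := by
  ext i j; fin_cases i <;> fin_cases j <;> simp [sigma3]

theorem sigma2_conjTranspose_mul_self : sigma2ᴴ * sigma2 = 1 := by
  ext i j; fin_cases i <;> fin_cases j <;> simp [sigma2, mul_apply, Fin.sum_univ_two]

theorem sigma2_conjTranspose_mul_sigma3_mul_sigma2 : sigma2ᴴ * sigma3 * sigma2 = -sigma3 := by
  ext i j; fin_cases i <;> fin_cases j <;> simp [sigma2, sigma3, mul_apply, Fin.sum_univ_two]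

theorem Mmat_eq_neg_conjTranspose_of_eq_sigma2_mulVec {N : ℕ} (l : Fin N → ℂ)
    (φ ψ : Fin N → ℝ × ℝ → Fin 2 → ℂ) (p q : ℝ × ℝ) (h : ∀ i, ψ i q = sigma2 *ᵥ φ i p) :
    Mmat l φ p = -(Mmat l ψ q)ᴴ := by
  ext i j
  have hone := star_mulVec_dotProduct_mulVec_mulVec sigma2 1 (φ i p) (φ j p)
  have hsigma3 := star_mulVec_dotProduct_mulVec_mulVec sigma2 sigma3 (φ i p) (φ j p)
  rw [sigma2_conjTranspose_mul_sigma3_mul_sigma2] at hsigma3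
  simp only [Matrix.mul_one, sigma2_conjTranspose_mul_self, one_mulVec] at hone
  rw [neg_apply, conjTranspose_apply]
  simp only [Mmat, of_apply, h, hone, hsigma3, neg_mulVec, dotProduct_neg,
    sigma3_isHermitian.star_star_dotProduct_mulVec, ← star_dotProduct, star_mul', star_sub,
    star_add, star_div₀, star_neg, Complex.star_def, Complex.conj_conj]
  rw [← neg_sub (starRingEnd ℂ (l j)) (l i), div_neg, add_comm (l i)]
  ring

theorem Mmat_symmetry_general {N : ℕ} (l : Fin N → ℂ)
    (φ : Fin N → ℝ × ℝ → Fin 2 → ℂ)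
    (hinv : ∀ i, ∀ ξ t : ℝ,
      φ i (-ξ, -t) 0 = -Complex.I * φ i (ξ, t) 1 ∧
      φ i (-ξ, -t) 1 = Complex.I * φ i (ξ, t) 0) :
    ∀ ξ t : ℝ, Mmat l φ (ξ, t) = -(Mmat l φ (-ξ, -t))ᴴ := by
  intro ξ t
  refine Mmat_eq_neg_conjTranspose_of_eq_sigma2_mulVec l φ φ _ _ fun i => ?_
  rw [sigma2_mulVec, ← (hinv i ξ t).1, ← (hinv i ξ t).2]
  ext k; fin_cases k <;> rfl

/-- If the eigenfunctions satisfy the involution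
`φᵢ⁽¹⁾(−ξ,−t) = −i φᵢ⁽²⁾(ξ,t)`, `φᵢ⁽²⁾(−ξ,−t) = i φᵢ⁽¹⁾(ξ,t)`, then
`M(ξ,t) = −M(−ξ,−t)†`. -/
theorem Mmat_symmetry {N : ℕ} (l : Fin N → ℂ)
    (hl : ∀ i j, starRingEnd ℂ (l j) ≠ l i ∧ starRingEnd ℂ (l j) ≠ -(l i))
    (φ : Fin N → ℝ × ℝ → Fin 2 → ℂ)
    (hinv : ∀ i, ∀ ξ t : ℝ,
      φ i (-ξ, -t) 0 = -Complex.I * φ i (ξ, t) 1 ∧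
      φ i (-ξ, -t) 1 = Complex.I * φ i (ξ, t) 0) :
    ∀ ξ t : ℝ, Mmat l φ (ξ, t) = -(Mmat l φ (-ξ, -t))ᴴ :=
  Mmat_symmetry_general l φ hinv
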